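/- arXiv:1611.07953 — 8 statements merged into one kernel-verified Lean document; each statement's English description precedes it below -/
import Mathlib

section
/- Let n ≥ 1 and let F = GF(2^n) be the field with 2^n elements (of characteristic 2). Define f : F × F → F by f(x,y) = 1 + x + y + x^(2^(n-1)) · y^(2^(n-1)). Then for all a, b, c, d, p, q ∈ F satisfying a·d + b·c = 1, one has p·f(a,b) + q·f(c,d) + f(p,q) = f(p·a + q·c, p·b + q·d). -/
/-- Lemma (Lemma 2.4 of the paper): for the field `F = GF(2^n)` and
`f(x,y) = 1 + x + y + x^(2^(n-1)) * y^(2^(n-1))`, whenever `a*d + b*c = 1` we have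
`p*f(a,b) + q*f(c,d) + f(p,q) = f(p*a + q*c, p*b + q*d)`. -/
theorem stmt_0 (n : ℕ) (hn : 1 ≤ n) (F : Type*) [Field F] [Fintype F]
    (hF : Fintype.card F = 2 ^ n)
    (f : F → F → F)
    (hf : ∀ x y : F, f x y = 1 + x + y + x ^ 2 ^ (n - 1) * y ^ 2 ^ (n - 1))
    (a b c d p q : F) (h : a * d + b * c = 1) :
    p * f a b + q * f c d + f p q = f (p * a + q * c) (p * b + q * d) := by
  have h2 : (2 : F) = 0 := by
    have hc := FiniteField.cast_card_eq_zero F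
    rw [hF] at hc
    push_cast at hc
    exact pow_eq_zero_iff (by omega) |>.mp hc
  have hchar : ringChar F = 2 := by
    have hd : ringChar F ∣ 2 := ringChar.dvd h2
    have h1 : ringChar F ≠ 1 := CharP.ringChar_ne_one
    rcases (Nat.prime_two).eq_one_or_self_of_dvd _ hd with h' | h' <;> omega
  haveI : CharP F 2 := hchar ▸ ringChar.charP F
  have hadd : ∀ x y : F, (x + y) ^ 2 ^ (n - 1) = x ^ 2 ^ (n - 1) + y ^ 2 ^ (n - 1) :=
    fun x y => add_pow_char_pow x y 2 (n - 1)
  have hs : ∀ x : F, x ^ 2 ^ (n - 1) * x ^ 2 ^ (n - 1) = x := by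
    intro x
    rw [← pow_add]
    have : 2 ^ (n - 1) + 2 ^ (n - 1) = 2 ^ n := by
      rw [← two_mul, ← pow_succ']
      congr 1; omega
    rw [this, ← hF, FiniteField.pow_card]
  have h' : a ^ 2 ^ (n - 1) * d ^ 2 ^ (n - 1) + b ^ 2 ^ (n - 1) * c ^ 2 ^ (n - 1) = 1 := by
    have := congrArg (· ^ 2 ^ (n - 1)) h
    simpa [hadd, mul_pow] using this
  simp only [hf, hadd, mul_pow]
  linear_combination (p + q) * h2 -
    a ^ 2 ^ (n - 1) * b ^ 2 ^ (n - 1) * hs p -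
    c ^ 2 ^ (n - 1) * d ^ 2 ^ (n - 1) * hs q -
    p ^ 2 ^ (n - 1) * q ^ 2 ^ (n - 1) * h'
end

section
/- Let n ≥ 1 and let F = GF(2^n). Define f(x,y) = 1 + x + y + x^(2^(n-1)) · y^(2^(n-1)) and g(x,y) = x + y + x^(2^(n-1)) · y^(2^(n-1)) = f(x,y) + 1. Then: (i) for all a, b, c, d, p, q ∈ F with a·d + b·c = 1 one has p·f(a,b) + q·f(c,d) + g(p,q) = g(p·a + q·c, p·b + q·d); and (ii) g is homogeneous of degree 1, i.e., for all a, b, t ∈ F, g(t·a, t·b) = t·g(a,b). -/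
/-- For `F = GF(2^n)`, `f(x,y) = 1 + x + y + x^(2^(n-1))·y^(2^(n-1))` and
`g(x,y) = f(x,y) + 1`: (i) the cocycle identity
`p·f(a,b) + q·f(c,d) + g(p,q) = g(pa+qc, pb+qd)` holds whenever `ad + bc = 1`, and
(ii) `g` is homogeneous of degree 1. -/
theorem stmt_1 (n : ℕ) (hn : 1 ≤ n) (F : Type*) [Field F] [Fintype F]
    (hF : Fintype.card F = 2 ^ n)
    (f g : F → F → F)
    (hf : ∀ x y : F, f x y = 1 + x + y + x ^ 2 ^ (n - 1) * y ^ 2 ^ (n - 1))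
    (hg : ∀ x y : F, g x y = x + y + x ^ 2 ^ (n - 1) * y ^ 2 ^ (n - 1)) :
    (∀ a b c d p q : F, a * d + b * c = 1 →
        p * f a b + q * f c d + g p q = g (p * a + q * c) (p * b + q * d)) ∧
    (∀ a b t : F, g (t * a) (t * b) = t * g a b) := by
  have hcast : ((2 : ℕ) : F) ^ n = 0 := by
    have := FiniteField.cast_card_eq_zero F
    rw [hF] at this
    push_cast at this ⊢
    exact this
  have h2 : (2 : F) = 0 := by
    have := pow_eq_zero_iff (n := n) (M₀ := F) (a := (2:F)) (by omega)
    push_cast at hcast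
    exact this.mp hcast
  have hchar : CharP F 2 :=
    (CharP.charP_iff_prime_eq_zero Nat.prime_two).2 (by exact_mod_cast h2)
  have hFrob : ∀ x y : F, (x + y) ^ 2 ^ (n - 1) = x ^ 2 ^ (n - 1) + y ^ 2 ^ (n - 1) :=
    fun x y => by
    haveI : Fact (Nat.Prime 2) := ⟨Nat.prime_two⟩
    exact add_pow_char_pow x y 2 (n-1)
  have hsq : ∀ x : F, x ^ 2 ^ (n - 1) * x ^ 2 ^ (n - 1) = x := by
    intro x
    rw [← pow_add, ← two_mul, ← pow_succ']
    have : n - 1 + 1 = n := by omega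
    rw [this, ← hF, FiniteField.pow_card]
  constructor
  · intro a b c d p q h
    have h1 : a ^ 2 ^ (n - 1) * d ^ 2 ^ (n - 1) + b ^ 2 ^ (n - 1) * c ^ 2 ^ (n - 1) = 1 := by
      have := congrArg (· ^ 2 ^ (n - 1)) h
      simpa [hFrob, mul_pow] using this
    rw [hf, hf, hg, hg, hFrob, hFrob, mul_pow, mul_pow, mul_pow, mul_pow]
    linear_combination (p + q) * h2 - a ^ 2 ^ (n-1) * b ^ 2 ^ (n-1) * hsq p
      - c ^ 2 ^ (n-1) * d ^ 2 ^ (n-1) * hsq q - p ^ 2 ^ (n-1) * q ^ 2 ^ (n-1) * h1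
  · intro a b t
    rw [hg, hg, mul_pow, mul_pow]
    linear_combination a ^ 2 ^ (n-1) * b ^ 2 ^ (n-1) * hsq t
end

section
/- Let n ≥ 1, let F = GF(2^n), and let k be a field of characteristic 2 equipped with an (injective) ring homomorphism ι : F → k. Let Λ be a finite additive subgroup of k² (column vectors) that is stable under left multiplication by every matrix in SL(2, F) (with entries acting on k² via ι). Then Λ is an F-submodule of k²: for every e ∈ F and every (α, β) ∈ Λ, the vector (ι(e)·α, ι(e)·β) lies in Λ. -/
/-- If `Λ` is a finite additive subgroup of `k²` stable under left multiplication by all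
matrices of `SL(2, GF(2^n))` (entries acting via `ι : GF(2^n) → k`), then `Λ` is stable
under multiplication by scalars from `GF(2^n)`. -/
theorem stmt_3 (n : ℕ) (hn : 1 ≤ n) (F : Type*) [Field F] [Fintype F]
    (hF : Fintype.card F = 2 ^ n)
    (k : Type*) [Field k] [CharP k 2] (ι : F →+* k) (hι : Function.Injective ι)
    (Λ : AddSubgroup (k × k)) (hΛfin : (Λ : Set (k × k)).Finite)
    (hstab : ∀ A : Matrix (Fin 2) (Fin 2) F, A.det = 1 → ∀ v ∈ Λ,
      (ι (A 0 0) * v.1 + ι (A 0 1) * v.2, ι (A 1 0) * v.1 + ι (A 1 1) * v.2) ∈ Λ) :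
    ∀ e : F, ∀ v ∈ Λ, (ι e * v.1, ι e * v.2) ∈ Λ := by
  intro e v hv
  -- upper triangular: (v₁ + e v₂, v₂) ∈ Λ
  have h1 := hstab !![1, e; 0, 1] (by simp [Matrix.det_fin_two_of]) v hv
  -- lower triangular: (v₁, e v₁ + v₂) ∈ Λ
  have h2 := hstab !![1, 0; e, 1] (by simp [Matrix.det_fin_two_of]) v hv
  -- subtract v to isolate (e v₂, 0) and (0, e v₁)
  have h3 : ((ι e * v.2, 0) : k × k) ∈ Λ := by
    have := Λ.sub_mem h1 hv
    simpa [Prod.sub_def, add_sub_cancel_left] using this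
  have h4 : ((0, ι e * v.1) : k × k) ∈ Λ := by
    have := Λ.sub_mem h2 hv
    simpa [Prod.sub_def, add_sub_cancel_left] using this
  -- rotate h4 to get (e v₁, 0)
  have h5 := hstab !![0, 1; -1, 0] (by simp [Matrix.det_fin_two_of]) _ h4
  simp only [Matrix.cons_val', Matrix.cons_val_zero, Matrix.cons_val_one, Matrix.head_cons,
    Matrix.empty_val', Matrix.cons_val_fin_one, Matrix.head_fin_const, map_one, map_zero,
    one_mul, zero_mul, mul_zero, add_zero, zero_add] at h5
  have h6 := hstab !![0, -1; 1, 0] (by simp [Matrix.det_fin_two_of]) _ h3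
  simp only [Matrix.cons_val', Matrix.cons_val_zero, Matrix.cons_val_one, Matrix.head_cons,
    Matrix.empty_val', Matrix.cons_val_fin_one, Matrix.head_fin_const, map_one, map_zero,
    one_mul, zero_mul, mul_zero, add_zero, zero_add] at h6
  have := Λ.add_mem h5 h6
  simpa [Prod.ext_iff] using this
end

section
/- Let n ≥ 1, let F = GF(2^n), and let k be a field of characteristic 2 with a ring homomorphism ι : F → k. Let Λ be a finite additive subgroup of k² stable under left multiplication by every matrix in SL(2, F) (entries acting via ι), and let Λ₁ ⊆ k be the image of Λ under the projection to the first coordinate. Then: (i) for every (α, β) ∈ Λ, the vectors (α, 0), (0, α), (β, 0), (0, β) all lie in Λ; and consequently (ii) Λ = Λ₁ × Λ₁ as a subset of k². -/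
/-- If `Λ` is a finite additive subgroup of `k²` stable under `SL(2, GF(2^n))`, then for
every `(α, β) ∈ Λ` the vectors `(α,0)`, `(0,α)`, `(β,0)`, `(0,β)` lie in `Λ`, and
`Λ = Λ₁ × Λ₁` where `Λ₁` is the projection of `Λ` to the first coordinate. -/
theorem stmt_4 (n : ℕ) (hn : 1 ≤ n) (F : Type*) [Field F] [Fintype F]
    (hF : Fintype.card F = 2 ^ n)
    (k : Type*) [Field k] [CharP k 2] (ι : F →+* k) (hι : Function.Injective ι)
    (Λ : AddSubgroup (k × k)) (hΛfin : (Λ : Set (k × k)).Finite)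
    (hstab : ∀ A : Matrix (Fin 2) (Fin 2) F, A.det = 1 → ∀ v ∈ Λ,
      (ι (A 0 0) * v.1 + ι (A 0 1) * v.2, ι (A 1 0) * v.1 + ι (A 1 1) * v.2) ∈ Λ) :
    (∀ v ∈ Λ, (v.1, (0 : k)) ∈ Λ ∧ ((0 : k), v.1) ∈ Λ ∧ (v.2, (0 : k)) ∈ Λ ∧
      ((0 : k), v.2) ∈ Λ) ∧
    (Λ : Set (k × k)) = (Prod.fst '' (Λ : Set (k × k))) ×ˢ (Prod.fst '' (Λ : Set (k × k))) := by
  haveI : CharP k 2 := inferInstance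
  have h2 : (-1 : k) = 1 := by
    have := CharTwo.neg_eq (R := k) 1
    simpa using this
  -- swap
  have hswap : ∀ v ∈ Λ, ((v.2, v.1) : k × k) ∈ Λ := by
    intro v hv
    have hdet : (!![0, 1; -1, 0] : Matrix (Fin 2) (Fin 2) F).det = 1 := by
      simp [Matrix.det_fin_two_of]
    have := hstab _ hdet v hv
    simpa [h2, neg_one_mul, CharTwo.neg_eq] using this
  -- second coordinate with zero
  have hsub : ∀ v ∈ Λ, ((v.2, (0 : k)) : k × k) ∈ Λ := by
    intro v hv
    have hdet : (!![1, 1; 0, 1] : Matrix (Fin 2) (Fin 2) F).det = 1 := by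
      simp [Matrix.det_fin_two_of]
    have hw := hstab _ hdet v hv
    have := Λ.sub_mem hw hv
    simpa [Prod.sub_def, add_sub_cancel_left] using this
  have hfirst : ∀ v ∈ Λ, ((v.1, (0 : k)) : k × k) ∈ Λ := fun v hv =>
    hsub (v.2, v.1) (hswap v hv)
  have key : ∀ v ∈ Λ, (v.1, (0 : k)) ∈ Λ ∧ ((0 : k), v.1) ∈ Λ ∧ (v.2, (0 : k)) ∈ Λ ∧
      ((0 : k), v.2) ∈ Λ := by
    intro v hv
    exact ⟨hfirst v hv, hswap _ (hfirst v hv), hsub v hv, hswap _ (hsub v hv)⟩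
  refine ⟨key, ?_⟩
  ext x
  constructor
  · intro hx
    exact ⟨⟨x, hx, rfl⟩, ⟨(x.2, x.1), hswap x hx, rfl⟩⟩
  · rintro ⟨⟨u, hu, hu1⟩, ⟨w, hw, hw1⟩⟩
    have h1 : ((x.1, (0 : k)) : k × k) ∈ Λ := hu1 ▸ hfirst u hu
    have h2' : (((0 : k), x.2) : k × k) ∈ Λ := hw1 ▸ hswap _ (hfirst w hw)
    have := Λ.add_mem h1 h2'
    simpa [Prod.ext_iff] using this
end

section
/- Let n ≥ 1, let F = GF(2^n), let k be a field of characteristic 2 with an injective ring homomorphism ι : F → k, and let γ ∈ k. Define f : F × F → F by f(x,y) = 1 + x + y + x^(2^(n-1)) · y^(2^(n-1)). Then the map sending a matrix A = [[a, b], [c, d]] ∈ SL(2, F) to the 3×3 matrix [[ι(a), ι(b), γ·ι(f(a,b))], [ι(c), ι(d), γ·ι(f(c,d))], [0, 0, 1]] over k is an injective group homomorphism from SL(2, F) into GL(3, k); in particular its image H_γ is a subgroup of GL(3, k) isomorphic to SL(2, F). -/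
section Aux

variable {F k : Type*} [Field F] [Field k] (ι : F →+* k) (γ : k) (f : F → F → F)

/-- The candidate map into 3×3 matrices. -/
private def stmt5Mmap (A : Matrix.SpecialLinearGroup (Fin 2) F) : Matrix (Fin 3) (Fin 3) k :=
  !![ι (A.1 0 0), ι (A.1 0 1), γ * ι (f (A.1 0 0) (A.1 0 1));
     ι (A.1 1 0), ι (A.1 1 1), γ * ι (f (A.1 1 0) (A.1 1 1));
     0, 0, 1]

private lemma stmt5Mmap_one (h0 : f 1 0 = 0) (h01 : f 0 1 = 0) : stmt5Mmap ι γ f 1 = 1 := by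
  unfold stmt5Mmap
  have e00 : (1 : Matrix.SpecialLinearGroup (Fin 2) F).1 0 0 = 1 := rfl
  have e01 : (1 : Matrix.SpecialLinearGroup (Fin 2) F).1 0 1 = 0 := rfl
  have e10 : (1 : Matrix.SpecialLinearGroup (Fin 2) F).1 1 0 = 0 := rfl
  have e11 : (1 : Matrix.SpecialLinearGroup (Fin 2) F).1 1 1 = 1 := rfl
  rw [e00, e01, e10, e11, h0, h01]
  simp [Matrix.one_fin_three]

private lemma stmt5Mmap_mul
    (hcoc : ∀ a b a' b' c' d' : F, a' * d' - b' * c' = 1 →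
      f (a * a' + b * c') (a * b' + b * d') = a * f a' b' + b * f c' d' + f a b)
    (A B : Matrix.SpecialLinearGroup (Fin 2) F) :
    stmt5Mmap ι γ f (A * B) = stmt5Mmap ι γ f A * stmt5Mmap ι γ f B := by
  have hdet : B.1 0 0 * B.1 1 1 - B.1 0 1 * B.1 1 0 = 1 := by
    have := B.2
    rwa [Matrix.det_fin_two] at this
  have hmul : ∀ i j : Fin 2, (A * B).1 i j =
      A.1 i 0 * B.1 0 j + A.1 i 1 * B.1 1 j := by
    intro i j
    rw [Matrix.SpecialLinearGroup.coe_mul, Matrix.mul_apply, Fin.sum_univ_two]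
  unfold stmt5Mmap
  rw [Matrix.mul_fin_three]
  ext i j
  fin_cases i <;> fin_cases j <;> simp [hmul, map_add, map_mul]
  all_goals rw [hcoc _ _ _ _ _ _ hdet]; push_cast [map_add, map_mul]; ring

end Aux

/-- For every `γ ∈ k`, the map sending `A = [[a,b],[c,d]] ∈ SL(2, GF(2^n))` to the 3×3
matrix `[[ι a, ι b, γ·ι(f(a,b))], [ι c, ι d, γ·ι(f(c,d))], [0,0,1]]` is an injective group
homomorphism into `GL(3, k)`; its image `H_γ` is a subgroup isomorphic to `SL(2, GF(2^n))`. -/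
theorem stmt_5 (n : ℕ) (hn : 1 ≤ n) (F : Type*) [Field F] [Fintype F]
    (hF : Fintype.card F = 2 ^ n)
    (k : Type*) [Field k] [CharP k 2] (ι : F →+* k) (hι : Function.Injective ι)
    (γ : k)
    (f : F → F → F)
    (hf : ∀ x y : F, f x y = 1 + x + y + x ^ 2 ^ (n - 1) * y ^ 2 ^ (n - 1)) :
    ∃ φ : Matrix.SpecialLinearGroup (Fin 2) F →* GL (Fin 3) k,
      Function.Injective φ ∧
      ∀ A : Matrix.SpecialLinearGroup (Fin 2) F,
        ((φ A : GL (Fin 3) k) : Matrix (Fin 3) (Fin 3) k) =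
          !![ι (A.1 0 0), ι (A.1 0 1), γ * ι (f (A.1 0 0) (A.1 0 1));
             ι (A.1 1 0), ι (A.1 1 1), γ * ι (f (A.1 1 0) (A.1 1 1));
             0, 0, 1] := by
  haveI : CharP F 2 := ι.charP hι 2
  -- the "square root" map `s x = x ^ 2^(n-1)` squares back to the identity
  have hsq : ∀ x : F, (x ^ 2 ^ (n - 1)) ^ 2 = x := by
    intro x
    rw [← pow_mul, ← pow_succ, Nat.sub_add_cancel hn, ← hF, FiniteField.pow_card]
  have hs_add : ∀ x y : F, (x + y) ^ 2 ^ (n - 1) = x ^ 2 ^ (n - 1) + y ^ 2 ^ (n - 1) :=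
    fun x y => add_pow_char_pow x y 2 (n - 1)
  have h2 : (2 : F) = 0 := by
    exact_mod_cast CharP.cast_eq_zero F 2
  have hee : (2 : ℕ) ^ (n - 1) ≠ 0 := pow_ne_zero _ two_ne_zero
  -- f vanishes at (1,0) and (0,1)
  have h0 : f 1 0 = 0 := by
    rw [hf, zero_pow hee]
    linear_combination h2
  have h01 : f 0 1 = 0 := by
    rw [hf, zero_pow hee]
    linear_combination h2
  -- the cocycle identity
  have hcoc : ∀ a b a' b' c' d' : F, a' * d' - b' * c' = 1 →
      f (a * a' + b * c') (a * b' + b * d') = a * f a' b' + b * f c' d' + f a b := by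
    intro a b a' b' c' d' hdet
    have hrel : a' ^ 2 ^ (n - 1) * d' ^ 2 ^ (n - 1) + b' ^ 2 ^ (n - 1) * c' ^ 2 ^ (n - 1)
        = 1 := by
      have h := congrArg (fun t : F => t ^ 2 ^ (n - 1)) hdet
      simp only [one_pow, CharTwo.sub_eq_add, hs_add, mul_pow] at h
      exact h
    simp only [hf, hs_add, mul_pow]
    set sa := a ^ 2 ^ (n - 1) with hsa
    set sb := b ^ 2 ^ (n - 1) with hsb
    set sa' := a' ^ 2 ^ (n - 1)
    set sb' := b' ^ 2 ^ (n - 1)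
    set sc' := c' ^ 2 ^ (n - 1)
    set sd' := d' ^ 2 ^ (n - 1)
    have ha : sa ^ 2 = a := hsq a
    have hb : sb ^ 2 = b := hsq b
    have ha' : sa' ^ 2 = a' := hsq a'
    have hb' : sb' ^ 2 = b' := hsq b'
    have hc' : sc' ^ 2 = c' := hsq c'
    have hd' : sd' ^ 2 = d' := hsq d'
    rw [← ha, ← hb, ← ha', ← hb', ← hc', ← hd']
    linear_combination (sa * sb) * hrel - (sa ^ 2 + sb ^ 2) * h2
  -- package everything as a group homomorphism into GL(3, k)
  have key := stmt5Mmap_mul ι γ f hcoc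
  have keyone := stmt5Mmap_one ι γ f h0 h01
  let u : Matrix.SpecialLinearGroup (Fin 2) F → GL (Fin 3) k := fun A =>
    ⟨stmt5Mmap ι γ f A, stmt5Mmap ι γ f A⁻¹,
      by rw [← key, mul_inv_cancel, keyone],
      by rw [← key, inv_mul_cancel, keyone]⟩
  refine ⟨MonoidHom.mk' u (fun A B => Units.ext (key A B)), ?_, fun A => rfl⟩
  intro A B hAB
  have hM : stmt5Mmap ι γ f A = stmt5Mmap ι γ f B := congrArg Units.val hAB
  apply Subtype.ext
  ext i j
  apply hι
  fin_cases i <;> fin_cases j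
  · exact congrFun (congrFun hM 0) 0
  · exact congrFun (congrFun hM 0) 1
  · exact congrFun (congrFun hM 1) 0
  · exact congrFun (congrFun hM 1) 1
end

section
/- Let n ≥ 1, let F = GF(2^n), set q = 2^n, let k be a field of characteristic 2 that is an F-algebra, let Λ₁ ⊆ k be a d-dimensional F-subspace of k, and let Λ = Λ₁ × Λ₁ ⊆ k². In the polynomial ring k[x, y, z] define f_x = ∏_{α ∈ Λ₁} (x + α·z), f_y = ∏_{α ∈ Λ₁} (y + α·z), and f_z = z. For each (α, β) ∈ Λ let σ_{α,β} be the k-algebra automorphism of k[x, y, z] determined by x ↦ x + α·z, y ↦ y + β·z, z ↦ z. Then the subalgebra of polynomials fixed by σ_{α,β} for all (α, β) ∈ Λ equals the k-subalgebra generated by f_x, f_y, f_z; moreover f_x, f_y, f_z are algebraically independent over k, so this ring of invariants is a polynomial ring. -/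
/-!
The translations `x ↦ x + αz` (`α ∈ Λ`) act on `k[x,y,z] = k[y,z][x]` as the substitutions
`X ↦ X + αz` of a polynomial ring in one variable over `S = k[y,z]`. For a finite additive group
`T ⊆ S` of translations, the invariants of `S[X]` are exactly `S[G]` with `G = ∏_{t ∈ T} (X + t)`:
`G` is invariant and monic, so division by `G` preserves invariance, and an invariant polynomial of
degree `< #T` takes the same value at all `t ∈ T`, hence is constant. The expansion in powers of
`G` is unique, so the `y`-translations act on it coefficientwise, and the same argument in
`k[y,z] = k[z][y]` finishes the description of the invariants.

Algebraic independence: `x` and `y` are roots of the monic polynomials `∏ (T + αz) - f_x` and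
`∏ (T + αz) - f_y`, so `k[x,y,z]` is integral over `k[f_x, f_y, z]`; three elements over which
a polynomial ring in three variables is algebraic form a transcendence basis.
-/

theorem Finset.prod_comp_add_right_of_add_mem {R M : Type*} [AddRightCancelSemigroup R]
    [CommMonoid M] {Λ : Finset R} (hΛ : ∀ a ∈ Λ, ∀ b ∈ Λ, a + b ∈ Λ) {α : R} (hα : α ∈ Λ)
    (f : R → M) : ∏ a ∈ Λ, f (a + α) = ∏ a ∈ Λ, f a := by
  classical
  have himage : Λ.image (· + α) = Λ :=
    Finset.eq_of_subset_of_card_le (Finset.image_subset_iff.2 fun a ha => hΛ a ha α hα)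
      (Finset.card_image_of_injective _ (add_left_injective α)).ge
  conv_rhs => rw [← himage]
  rw [Finset.prod_image fun a _ b _ h => add_right_cancel h]

theorem Algebra.mem_adjoin_of_map_mem_adjoin_image {R A B : Type*} [CommSemiring R] [Semiring A]
    [Semiring B] [Algebra R A] [Algebra R B] (e : A ≃ₐ[R] B) {s : Set A} {a : A}
    (h : e a ∈ Algebra.adjoin R (e '' s)) : a ∈ Algebra.adjoin R s := by
  obtain ⟨a', ha', he⟩ := Subalgebra.mem_map.1 ((Algebra.adjoin_image R e.toAlgHom s) ▸ h)
  rwa [← e.injective he]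

namespace Polynomial

theorem comp_left_injective {R : Type*} [Ring R] [NoZeroDivisors R] {q : R[X]}
    (hq : q.natDegree ≠ 0) : Function.Injective fun p : R[X] => p.comp q := by
  intro a b h
  have hab : (a - b).comp q = 0 := by rw [sub_comp, sub_eq_zero]; exact h
  rcases comp_eq_zero_iff.1 hab with hab | ⟨-, hqC⟩
  · exact sub_eq_zero.1 hab
  · exact absurd (by rw [hqC, natDegree_C]) hq

theorem comp_mem_adjoin {R S : Type*} [CommSemiring R] [CommSemiring S] [Algebra R S]
    {A : Subalgebra R S[X]} {c G : S[X]} (hG : G ∈ A) (hc : ∀ i, C (c.coeff i) ∈ A) :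
    c.comp G ∈ A := by
  rw [comp_eq_sum_left]
  exact A.sum_mem fun i _ => A.mul_mem (hc i) (A.pow_mem hG i)

theorem natDegree_prod_X_add_C {R ι : Type*} [CommSemiring R] [Nontrivial R] (s : Finset ι)
    (f : ι → R) : (∏ i ∈ s, (X + C (f i))).natDegree = s.card := by
  simp [natDegree_prod_of_monic _ _ fun i _ => monic_X_add_C (f i)]

variable {R : Type*} [CommRing R] {T : Finset R}

theorem prod_X_add_C_comp_X_add_C (hT : ∀ s ∈ T, ∀ t ∈ T, s + t ∈ T) {t : R} (ht : t ∈ T) :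
    (∏ s ∈ T, (X + C s)).comp (X + C t) = ∏ s ∈ T, (X + C s) := by
  simp only [prod_comp, add_comp, X_comp, C_comp]
  simpa only [C_add, add_assoc, add_comm (C t)] using
    T.prod_comp_add_right_of_add_mem hT ht fun s => X + C s

variable [IsDomain R]

theorem map_eq_self_of_map_comp_eq {ψ : R →+* R} {c G : R[X]} (hG : G.natDegree ≠ 0)
    (hψG : G.map ψ = G) (h : (c.comp G).map ψ = c.comp G) : c.map ψ = c :=
  comp_left_injective hG (by simpa only [map_comp, hψG] using h)

theorem comp_X_add_C_divByMonic_and_modByMonic {p G : R[X]} (hG : G.Monic) {t : R}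
    (hGt : G.comp (X + C t) = G) (hpt : p.comp (X + C t) = p) :
    (p /ₘ G).comp (X + C t) = p /ₘ G ∧ (p %ₘ G).comp (X + C t) = p %ₘ G := by
  have hdeg : ((p %ₘ G).comp (X + C t)).degree < G.degree := by
    rw [degree_comp (by rw [degree_X_add_C]; exact zero_lt_one), degree_X_add_C, mul_one]
    exact degree_modByMonic_lt p hG
  have hsum : (p %ₘ G).comp (X + C t) + G * (p /ₘ G).comp (X + C t) = p := by
    have := congrArg (·.comp (X + C t)) (modByMonic_add_div p G)
    rwa [add_comp, mul_comp, hGt, hpt] at this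
  exact (div_modByMonic_unique _ _ hG ⟨hsum, hdeg⟩).imp Eq.symm Eq.symm

theorem eq_C_eval_zero_of_forall_comp_X_add_C_eq {p : R[X]} (hdeg : p.natDegree < T.card)
    (hp : ∀ t ∈ T, p.comp (X + C t) = p) : p = C (p.eval 0) := by
  refine sub_eq_zero.1 (eq_zero_of_natDegree_lt_card_of_eval_eq_zero' _ T (fun t ht => ?_) ?_)
  · have := congrArg (eval 0) (hp t ht)
    simp only [eval_comp, eval_add, eval_X, eval_C, zero_add] at this
    rw [eval_sub, eval_C, this, sub_self]
  · rwa [natDegree_sub_C]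

theorem exists_eq_comp_prod_X_add_C (hT : ∀ s ∈ T, ∀ t ∈ T, s + t ∈ T) (hT₀ : T.Nonempty)
    (p : R[X]) (hp : ∀ t ∈ T, p.comp (X + C t) = p) :
    ∃ c : R[X], p = c.comp (∏ t ∈ T, (X + C t)) := by
  set G := ∏ t ∈ T, (X + C t)
  have hGm : G.Monic := monic_prod_of_monic _ _ fun t _ => monic_X_add_C t
  have hGdeg : G.natDegree = T.card := natDegree_prod_X_add_C T id
  have hG1 : G ≠ 1 := fun h => by
    rw [h, natDegree_one] at hGdeg; exact hT₀.card_pos.ne hGdeg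
  induction hN : p.natDegree using Nat.strong_induction_on generalizing p with
  | _ N ih =>
  by_cases hlt : p.natDegree < T.card
  · exact ⟨C (p.eval 0), by rw [C_comp]; exact eq_C_eval_zero_of_forall_comp_X_add_C_eq hlt hp⟩
  have hqr t ht := comp_X_add_C_divByMonic_and_modByMonic hGm
    (prod_X_add_C_comp_X_add_C hT ht) (hp t ht)
  obtain ⟨c, hc⟩ := ih _ (by rw [natDegree_divByMonic _ hGm, hGdeg]; have := hT₀.card_pos; omega)
    (p /ₘ G) (fun t ht => (hqr t ht).1) rfl
  have hr := eq_C_eval_zero_of_forall_comp_X_add_C_eq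
    (hGdeg ▸ natDegree_modByMonic_lt p hGm hG1) fun t ht => (hqr t ht).2
  refine ⟨c * X + C ((p %ₘ G).eval 0), ?_⟩
  rw [add_comp, mul_comp, X_comp, C_comp, ← hc, ← hr, mul_comm, add_comm]
  exact (modByMonic_add_div p G).symm

end Polynomial

theorem IsIntegral.of_prod_add_algebraMap_mul_mem {R A : Type*} [CommRing R] [CommRing A]
    [Algebra R A] {B : Subalgebra R A} {Λ : Finset R} (hΛ : Λ.Nonempty) {a z : A} (hz : z ∈ B)
    (ha : ∏ α ∈ Λ, (a + algebraMap R A α * z) ∈ B) : IsIntegral B a := by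
  nontriviality A
  refine IsIntegral.of_aeval_monic (p := ∏ α ∈ Λ,
      (Polynomial.X + Polynomial.C (algebraMap R B α * ⟨z, hz⟩)))
    (Polynomial.monic_prod_of_monic _ _ fun _ _ => Polynomial.monic_X_add_C _)
    (by rw [Polynomial.natDegree_prod_X_add_C]; exact hΛ.card_pos.ne') ?_
  convert isIntegral_algebraMap (x := (⟨_, ha⟩ : B))
  simp [map_prod]

namespace MvPolynomial

theorem algebraIsIntegral_of_forall_isIntegral_X {R B σ : Type*} [CommRing R] [CommRing B]
    [Algebra R B] [Algebra B (MvPolynomial σ R)] [IsScalarTower R B (MvPolynomial σ R)]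
    (h : ∀ i, IsIntegral B (X i : MvPolynomial σ R)) : Algebra.IsIntegral B (MvPolynomial σ R) := by
  rw [← integralClosure_eq_top_iff, eq_top_iff]
  intro p _
  have : Algebra.adjoin R (Set.range X) ≤
      (integralClosure B (MvPolynomial σ R)).restrictScalars R :=
    Algebra.adjoin_le (Set.range_subset_iff.2 h)
  exact this (adjoin_range_X (R := R) ▸ Algebra.mem_top)

theorem algebraicIndependent_of_isAlgebraic {R ι : Type*} [CommRing R] [IsDomain R] [Finite ι]
    (x : ι → MvPolynomial ι R)
    [Algebra.IsAlgebraic (Algebra.adjoin R (Set.range x)) (MvPolynomial ι R)] :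
    AlgebraicIndependent R x :=
  (Algebra.IsAlgebraic.isTranscendenceBasis_of_lift_le_trdeg_of_finite R x (by simp)).1

variable {R : Type*} [CommRing R]

@[simp]
theorem finSuccEquiv_C {n : ℕ} (a : R) : finSuccEquiv R n (C a) = Polynomial.C (C a) :=
  (finSuccEquiv R n).commutes a

@[simp]
theorem finSuccEquiv_X_one {n : ℕ} : finSuccEquiv R (n + 1) (X 1) = Polynomial.C (X 0) :=
  finSuccEquiv_X_succ (j := 0)

@[simp]
theorem finSuccEquiv_X_two {n : ℕ} : finSuccEquiv R (n + 2) (X 2) = Polynomial.C (X 1) :=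
  finSuccEquiv_X_succ (j := 1)

-- `f_x = orbitProd Λ 0 2` and `f_y = orbitProd Λ 1 2`, with `(x, y, z) = (X 0, X 1, X 2)`.
noncomputable def orbitProd {σ : Type*} (Λ : Finset R) (i j : σ) : MvPolynomial σ R :=
  ∏ a ∈ Λ, (X i + C a * X j)

theorem aeval_orbitProd {σ : Type*} {Λ : Finset R} (hΛ : ∀ a ∈ Λ, ∀ b ∈ Λ, a + b ∈ Λ)
    {α : R} (hα : α ∈ Λ) {i j : σ} {g : σ → MvPolynomial σ R}
    (hi : g i = X i + C α * X j) (hj : g j = X j) :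
    aeval g (orbitProd Λ i j) = orbitProd Λ i j := by
  rw [orbitProd, map_prod, ← Λ.prod_comp_add_right_of_add_mem hΛ hα fun a => X i + C a * X j]
  refine Finset.prod_congr rfl fun a _ => ?_
  simp only [map_add, map_mul, aeval_X, aeval_C, algebraMap_eq, hi, hj]
  ring

theorem finSuccEquiv_orbitProd_zero_succ {n : ℕ} [DecidableEq (MvPolynomial (Fin n) R)]
    (Λ : Finset R) (j : Fin n) :
    finSuccEquiv R n (orbitProd Λ 0 j.succ) =
      ∏ t ∈ Λ.image (C · * X j), (Polynomial.X + Polynomial.C t) := by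
  rw [orbitProd, map_prod, Finset.prod_image fun a _ b _ h => by
    simpa using congrArg (coeff (Finsupp.single j 1)) h]
  simp [finSuccEquiv_X_zero, finSuccEquiv_X_succ]

theorem finSuccEquiv_orbitProd_succ_succ {n : ℕ} (Λ : Finset R) (i j : Fin n) :
    finSuccEquiv R n (orbitProd Λ i.succ j.succ) = Polynomial.C (orbitProd Λ i j) := by
  simp [orbitProd, map_prod, finSuccEquiv_X_succ]

theorem add_mem_image_C_mul_X {σ : Type*} [DecidableEq (MvPolynomial σ R)] {Λ : Finset R}
    (hΛ : ∀ a ∈ Λ, ∀ b ∈ Λ, a + b ∈ Λ) (j : σ) :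
    ∀ s ∈ Λ.image (C · * X j), ∀ t ∈ Λ.image (C · * X j), s + t ∈ Λ.image (C · * X j) := by
  simp only [Finset.forall_mem_image]
  intro a ha b hb
  exact Finset.mem_image.2 ⟨a + b, hΛ a ha b hb, by rw [C_add, add_mul]⟩

noncomputable def shear₂ (β : R) : MvPolynomial (Fin 2) R →ₐ[R] MvPolynomial (Fin 2) R :=
  aeval ![X 0 + C β * X 1, X 1]

noncomputable def shear₃ (α β : R) : MvPolynomial (Fin 3) R →ₐ[R] MvPolynomial (Fin 3) R :=
  aeval ![X 0 + C α * X 2, X 1 + C β * X 2, X 2]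

theorem shear₂_zero : shear₂ (0 : R) = AlgHom.id R _ := by
  ext i
  fin_cases i <;> simp [shear₂]

theorem shear₃_orbitProd_zero_two {Λ : Finset R} (hΛ : ∀ a ∈ Λ, ∀ b ∈ Λ, a + b ∈ Λ) {α : R}
    (hα : α ∈ Λ) (β : R) : shear₃ α β (orbitProd Λ 0 2) = orbitProd Λ 0 2 :=
  aeval_orbitProd hΛ hα rfl rfl

theorem shear₃_orbitProd_one_two {Λ : Finset R} (hΛ : ∀ a ∈ Λ, ∀ b ∈ Λ, a + b ∈ Λ) (α : R)
    {β : R} (hβ : β ∈ Λ) : shear₃ α β (orbitProd Λ 1 2) = orbitProd Λ 1 2 :=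
  aeval_orbitProd hΛ hβ rfl rfl

theorem finSuccEquiv_shear₂ (β : R) (r : MvPolynomial (Fin 2) R) :
    finSuccEquiv R 1 (shear₂ β r) =
      (finSuccEquiv R 1 r).comp (Polynomial.X + Polynomial.C (C β * X 0)) := by
  induction r using MvPolynomial.induction_on with
  | C a => simp
  | add p q hp hq => simp only [map_add, hp, hq, Polynomial.add_comp]
  | mul_X p i hp =>
    have hX : finSuccEquiv R 1 (shear₂ β (X i)) =
        (finSuccEquiv R 1 (X i)).comp (Polynomial.X + Polynomial.C (C β * X 0)) := by
      fin_cases i <;> simp [shear₂, finSuccEquiv_X_zero]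
    simp only [map_mul, hp, hX, Polynomial.mul_comp]

theorem finSuccEquiv_shear₃ (α β : R) (p : MvPolynomial (Fin 3) R) :
    finSuccEquiv R 2 (shear₃ α β p) =
      ((finSuccEquiv R 2 p).map (shear₂ β)).comp (Polynomial.X + Polynomial.C (C α * X 1)) := by
  induction p using MvPolynomial.induction_on with
  | C a => simp [shear₂]
  | add p q hp hq => simp only [map_add, hp, hq, Polynomial.map_add, Polynomial.add_comp]
  | mul_X p i hp =>
    have hX : finSuccEquiv R 2 (shear₃ α β (X i)) =
        ((finSuccEquiv R 2 (X i)).map (shear₂ β)).comp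
          (Polynomial.X + Polynomial.C (C α * X 1)) := by
      fin_cases i <;> simp [shear₃, shear₂, finSuccEquiv_X_zero]
    simp only [map_mul, hp, hX, Polynomial.map_mul, Polynomial.mul_comp]

theorem finSuccEquiv_shear₃_zero_left (β : R) (p : MvPolynomial (Fin 3) R) :
    finSuccEquiv R 2 (shear₃ 0 β p) = (finSuccEquiv R 2 p).map (shear₂ β) := by
  simp [finSuccEquiv_shear₃]

theorem finSuccEquiv_shear₃_zero_right (α : R) (p : MvPolynomial (Fin 3) R) :
    finSuccEquiv R 2 (shear₃ α 0 p) =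
      (finSuccEquiv R 2 p).comp (Polynomial.X + Polynomial.C (C α * X 1)) := by
  simp [finSuccEquiv_shear₃, shear₂_zero]

variable [IsDomain R] {Λ : Finset R}

theorem mem_adjoin_of_forall_shear₂_eq (hΛ₀ : Λ.Nonempty) (hΛ : ∀ a ∈ Λ, ∀ b ∈ Λ, a + b ∈ Λ)
    {r : MvPolynomial (Fin 2) R} (hr : ∀ β ∈ Λ, shear₂ β r = r) :
    r ∈ Algebra.adjoin R {orbitProd Λ 0 1, X 1} := by
  classical
  obtain ⟨c, hc⟩ := Polynomial.exists_eq_comp_prod_X_add_C (add_mem_image_C_mul_X hΛ 0)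
    (hΛ₀.image _) (finSuccEquiv R 1 r) (by
      simp only [Finset.forall_mem_image]
      intro β hβ
      rw [← finSuccEquiv_shear₂, hr β hβ])
  rw [← finSuccEquiv_orbitProd_zero_succ] at hc
  refine Algebra.mem_adjoin_of_map_mem_adjoin_image (finSuccEquiv R 1) ?_
  rw [Set.image_pair, hc]
  refine Polynomial.comp_mem_adjoin (Algebra.subset_adjoin (Set.mem_insert _ _)) fun i => ?_
  have hcoeff : c.coeff i ∈ Algebra.adjoin R {X 0} := by
    have : c.coeff i ∈ Algebra.adjoin R (Set.range X) := adjoin_range_X (R := R) ▸ Algebra.mem_top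
    simpa [Set.range_unique] using this
  have := (Subalgebra.mem_map (f := Polynomial.CAlgHom)).2 ⟨_, hcoeff, rfl⟩
  rw [AlgHom.map_adjoin, Set.image_singleton] at this
  exact Algebra.adjoin_mono (by simp) this

theorem mem_adjoin_of_forall_shear₃_eq (hΛ₀ : 0 ∈ Λ) (hΛ : ∀ a ∈ Λ, ∀ b ∈ Λ, a + b ∈ Λ)
    {p : MvPolynomial (Fin 3) R} (hp : ∀ α ∈ Λ, ∀ β ∈ Λ, shear₃ α β p = p) :
    p ∈ Algebra.adjoin R {orbitProd Λ 0 2, orbitProd Λ 1 2, X 2} := by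
  classical
  set e := finSuccEquiv R 2
  obtain ⟨c, hc⟩ := Polynomial.exists_eq_comp_prod_X_add_C (add_mem_image_C_mul_X hΛ 1)
    ⟨_, Finset.mem_image_of_mem _ hΛ₀⟩ (e p) (by
      simp only [Finset.forall_mem_image]
      intro α hα
      rw [← finSuccEquiv_shear₃_zero_right, hp α hα 0 hΛ₀])
  have hG : e (orbitProd Λ 0 2) = ∏ t ∈ Λ.image (C · * X 1), (Polynomial.X + Polynomial.C t) :=
    finSuccEquiv_orbitProd_zero_succ Λ 1
  rw [← hG] at hc
  have hdeg : (e (orbitProd Λ 0 2)).natDegree ≠ 0 := by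
    rw [hG]
    exact (Polynomial.natDegree_prod_X_add_C _ id).trans_ne
      (Finset.card_ne_zero_of_mem (Finset.mem_image_of_mem _ hΛ₀))
  have hcoeff (i : ℕ) : ∀ β ∈ Λ, shear₂ β (c.coeff i) = c.coeff i := by
    intro β hβ
    have hmap := Polynomial.map_eq_self_of_map_comp_eq (ψ := shear₂ β) hdeg
      (by rw [← finSuccEquiv_shear₃_zero_left, shear₃_orbitProd_zero_two hΛ hΛ₀])
      (by rw [← hc, ← finSuccEquiv_shear₃_zero_left, hp 0 hΛ₀ β hβ])
    simpa using congrArg (Polynomial.coeff · i) hmap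
  refine Algebra.mem_adjoin_of_map_mem_adjoin_image e ?_
  rw [hc]
  refine Polynomial.comp_mem_adjoin
    (Algebra.subset_adjoin (Set.mem_image_of_mem e (Set.mem_insert _ _))) fun i => ?_
  have := (Subalgebra.mem_map (f := Polynomial.CAlgHom)).2
    ⟨_, mem_adjoin_of_forall_shear₂_eq ⟨0, hΛ₀⟩ hΛ (hcoeff i), rfl⟩
  rw [AlgHom.map_adjoin, Set.image_pair] at this
  refine Algebra.adjoin_mono ?_ this
  have hfy : e (orbitProd Λ 1 2) = Polynomial.C (orbitProd Λ 0 1) :=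
    finSuccEquiv_orbitProd_succ_succ Λ 0 1
  have hz : e (X 2) = Polynomial.C (X 1) := finSuccEquiv_X_two
  simp [Set.insert_subset_iff, ← hfy, ← hz]

theorem mem_adjoin_orbitProd_iff (hΛ₀ : 0 ∈ Λ) (hΛ : ∀ a ∈ Λ, ∀ b ∈ Λ, a + b ∈ Λ)
    (p : MvPolynomial (Fin 3) R) :
    p ∈ Algebra.adjoin R {orbitProd Λ 0 2, orbitProd Λ 1 2, X 2} ↔
      ∀ α ∈ Λ, ∀ β ∈ Λ, shear₃ α β p = p := by
  refine ⟨fun hp α hα β hβ => ?_, mem_adjoin_of_forall_shear₃_eq hΛ₀ hΛ⟩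
  refine Algebra.adjoin_le (S := AlgHom.equalizer (shear₃ α β) (AlgHom.id R _)) ?_ hp
  rintro _ (rfl | rfl | rfl)
  · exact shear₃_orbitProd_zero_two hΛ hα β
  · exact shear₃_orbitProd_one_two hΛ α hβ
  · simp [shear₃]

theorem algebraicIndependent_orbitProd (hΛ : Λ.Nonempty) :
    AlgebraicIndependent R ![orbitProd Λ 0 2, orbitProd Λ 1 2, (X 2 : MvPolynomial (Fin 3) R)] := by
  set x := ![orbitProd Λ 0 2, orbitProd Λ 1 2, (X 2 : MvPolynomial (Fin 3) R)]
  have hmem (i : Fin 3) : x i ∈ Algebra.adjoin R (Set.range x) := Algebra.subset_adjoin ⟨i, rfl⟩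
  have : Algebra.IsIntegral (Algebra.adjoin R (Set.range x)) (MvPolynomial (Fin 3) R) := by
    refine algebraIsIntegral_of_forall_isIntegral_X fun i => ?_
    fin_cases i
    · exact .of_prod_add_algebraMap_mul_mem hΛ (hmem 2) (hmem 0)
    · exact .of_prod_add_algebraMap_mul_mem hΛ (hmem 2) (hmem 1)
    · exact isIntegral_algebraMap (x := (⟨_, hmem 2⟩ : Algebra.adjoin R (Set.range x)))
  exact algebraicIndependent_of_isAlgebraic x

end MvPolynomial

open MvPolynomial in
theorem stmt_8_general (F : Type*) [Field F]
    (k : Type*) [Field k] [Algebra F k]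
    (Λ₁ : Submodule F k) (hfin : (Λ₁ : Set k).Finite)
    (σ : k → k → MvPolynomial (Fin 3) k →ₐ[k] MvPolynomial (Fin 3) k)
    (hσ : ∀ α β : k, σ α β = aeval ![X 0 + C α * X 2, X 1 + C β * X 2, X 2])
    (fx fy fz : MvPolynomial (Fin 3) k)
    (hfx : fx = ∏ α ∈ hfin.toFinset, (X 0 + C α * X 2))
    (hfy : fy = ∏ α ∈ hfin.toFinset, (X 1 + C α * X 2))
    (hfz : fz = X 2) :
    (∀ p : MvPolynomial (Fin 3) k,
      (∀ α β : k, α ∈ Λ₁ → β ∈ Λ₁ → σ α β p = p) ↔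
        p ∈ Algebra.adjoin k {fx, fy, fz}) ∧
    AlgebraicIndependent k ![fx, fy, fz] := by
  obtain rfl : σ = shear₃ := funext₂ hσ
  subst hfx hfy hfz
  have hΛ₀ : (0 : k) ∈ hfin.toFinset := hfin.mem_toFinset.2 Λ₁.zero_mem
  have hΛ : ∀ a ∈ hfin.toFinset, ∀ b ∈ hfin.toFinset, a + b ∈ hfin.toFinset := by
    simpa using fun a ha b hb => Λ₁.add_mem ha hb
  refine ⟨fun p => ?_, algebraicIndependent_orbitProd ⟨0, hΛ₀⟩⟩
  rw [← orbitProd, ← orbitProd, mem_adjoin_orbitProd_iff hΛ₀ hΛ]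
  simp only [Set.Finite.mem_toFinset, SetLike.mem_coe]
  exact ⟨fun h α hα β hβ => h α β hα hβ, fun h α β hα hβ => h α hα β hβ⟩

open MvPolynomial in
/-- The invariants of the translation group `N = {σ_{α,β} : (α,β) ∈ Λ₁ × Λ₁}` acting on
`k[x,y,z]` by `x ↦ x + αz`, `y ↦ y + βz`, `z ↦ z` form the polynomial algebra generated
by `f_x = ∏_{α∈Λ₁}(x + αz)`, `f_y = ∏_{α∈Λ₁}(y + αz)`, `f_z = z`. -/
theorem stmt_8 (n : ℕ) (hn : 1 ≤ n) (F : Type*) [Field F] [Fintype F]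
    (hF : Fintype.card F = 2 ^ n)
    (k : Type*) [Field k] [CharP k 2] [Algebra F k]
    (Λ₁ : Submodule F k) (hfin : (Λ₁ : Set k).Finite)
    (d : ℕ) (hd : Module.finrank F Λ₁ = d)
    (σ : k → k → MvPolynomial (Fin 3) k →ₐ[k] MvPolynomial (Fin 3) k)
    (hσ : ∀ α β : k, σ α β = aeval ![X 0 + C α * X 2, X 1 + C β * X 2, X 2])
    (fx fy fz : MvPolynomial (Fin 3) k)
    (hfx : fx = ∏ α ∈ hfin.toFinset, (X 0 + C α * X 2))
    (hfy : fy = ∏ α ∈ hfin.toFinset, (X 1 + C α * X 2))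
    (hfz : fz = X 2) :
    (∀ p : MvPolynomial (Fin 3) k,
      (∀ α β : k, α ∈ Λ₁ → β ∈ Λ₁ → σ α β p = p) ↔
        p ∈ Algebra.adjoin k {fx, fy, fz}) ∧
    AlgebraicIndependent k ![fx, fy, fz] :=
  stmt_8_general F k Λ₁ hfin σ hσ fx fy fz hfx hfy hfz
end

section
/- Let n > 1, let F = GF(2^n), and let k be a field of characteristic 2 with an injective ring homomorphism ι : F → k. Define g : F × F → F by g(x,y) = x + y + x^(2^(n-1))·y^(2^(n-1)) and f(x,y) = g(x,y) + 1. For each (a, b) ∈ F² define the linear form ℓ̃_{a,b} = ι(a)·x + ι(b)·y + ι(g(a,b))·z in k[x,y,z]. Define c̃₀ = ∏_{(a,b) ∈ F², (a,b) ≠ (0,0)} ℓ̃_{a,b}, and c̃₁ = Σ_L ∏_{(a,b) ∈ F² : a·u₁ + b·u₂ ≠ 0} ℓ̃_{a,b}, where the sum runs over all one-dimensional F-subspaces L of F² and (u₁, u₂) is any nonzero vector in L. For A = [[a,b],[c,d]] ∈ SL(2, F), let τ_A be the k-algebra automorphism of k[x,y,z] with x ↦ ι(a)·x + ι(b)·y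 + ι(f(a,b))·z, y ↦ ι(c)·x + ι(d)·y + ι(f(c,d))·z, z ↦ z. Then c̃₀ and c̃₁ are fixed by τ_A for every A ∈ SL(2, F). -/
/-!
Write `s x = x ^ 2 ^ (n - 1)` for the square root in `F`, so that `g x y = x + y + s x * s y`.
Substituting `τ_A` into `ℓ̃_v` gives `ℓ̃_{vA}`: the `x`, `y`-coefficients transform by `A`, and the
`z`-coefficient comes out right because `s` is additive and `s (ad + bc) = s (det A) = 1` in
characteristic 2. Hence `τ_A` permutes the factors of `c̃₀`. The summand of `c̃₁` for the line
through `u` is sent to the summand for the line through `A⁻¹ u`, since `(vA) · (A⁻¹ u) = v · u`;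
as the summand depends only on the line and `A⁻¹` permutes the lines, `c̃₁` is fixed as well.
-/
theorem sq_pow_two_pow_pred_of_card_eq {F : Type*} [Field F] [Fintype F] {n : ℕ}
    (hF : Fintype.card F = 2 ^ n) (x : F) : (x ^ 2 ^ (n - 1)) ^ 2 = x := by
  have hn : n ≠ 0 := by
    rintro rfl
    exact (Fintype.one_lt_card (α := F)).ne' hF
  rw [← pow_mul, ← pow_succ, Nat.sub_add_cancel (Nat.one_le_iff_ne_zero.2 hn), ← hF,
    FiniteField.pow_card]

section SqrtForm

variable {R : Type*} [CommRing R]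

/-- The paper's `g` when `s` is the square root map. -/
def sqrtForm (s : R →+* R) (x y : R) : R := x + y + s x * s y

theorem sqrtForm_mulVec [CharP R 2] (s : R →+* R) (hs : ∀ x, s x ^ 2 = x) {a b c d : R}
    (hdet : a * d - b * c = 1) (p q : R) :
    sqrtForm s (a * p + c * q) (b * p + d * q)
      = p * (sqrtForm s a b + 1) + q * (sqrtForm s c d + 1) + sqrtForm s p q := by
  have h2 : (2 : R) = 0 := CharTwo.two_eq_zero
  have hdet' : s a * s d - s b * s c = 1 := by
    simpa only [map_sub, map_mul, map_one] using congrArg s hdet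
  simp only [sqrtForm, map_add, map_mul]
  linear_combination s a * s b * hs p + s c * s d * hs q + s p * s q * hdet'
    - (p + q - s p * s q * s b * s c) * h2

end SqrtForm

section LinearForm

variable {F k : Type*} [CommRing F] [CommRing k]

open MvPolynomial

noncomputable def linearForm (ι : F →+* k) (a b e : F) : MvPolynomial (Fin 3) k :=
  C (ι a) * X 0 + C (ι b) * X 1 + C (ι e) * X 2

theorem aeval_linearForm (ι : F →+* k) (a b c d e e' p q r : F) :
    aeval ![linearForm ι a b e, linearForm ι c d e', X 2] (linearForm ι p q r)
      = linearForm ι (a * p + c * q) (b * p + d * q) (p * e + q * e' + r) := by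
  simp only [linearForm, map_add, map_mul, aeval_C, aeval_X, algebraMap_eq, Matrix.cons_val]
  ring

end LinearForm

theorem map_prod_eq_of_equivariant {ι R G : Type*} [CommMonoid R] [FunLike G R R]
    [MonoidHomClass G R R] (φ : G) (e : ι ≃ ι) (ℓ : ι → R) (hℓ : ∀ i, φ (ℓ i) = ℓ (e i))
    {s t : Finset ι} (hst : ∀ i, i ∈ s ↔ e i ∈ t) : φ (∏ i ∈ s, ℓ i) = ∏ i ∈ t, ℓ i := by
  rw [map_prod]
  exact Finset.prod_equiv e hst fun i _ ↦ hℓ i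

namespace Matrix.SpecialLinearGroup

open scoped MatrixGroups

variable {R : Type*} [CommRing R]

def mulVecProd (A : SL(2, R)) : (R × R) ≃ₗ[R] (R × R) :=
  (LinearEquiv.finTwoArrow R R).symm ≪≫ₗ toLin' A ≪≫ₗ LinearEquiv.finTwoArrow R R

theorem mulVecProd_apply (A : SL(2, R)) (v : R × R) :
    A.mulVecProd v = (A 0 0 * v.1 + A 0 1 * v.2, A 1 0 * v.1 + A 1 1 * v.2) := by
  simp [mulVecProd, toLin'_apply]

theorem dot_mulVecProd_transpose_inv (A : SL(2, R)) (v u : R × R) :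
    (Aᵀ.mulVecProd v).1 * (A⁻¹.mulVecProd u).1 + (Aᵀ.mulVecProd v).2 * (A⁻¹.mulVecProd u).2
      = v.1 * u.1 + v.2 * u.2 := by
  have hdet : A 0 0 * A 1 1 - A 0 1 * A 1 0 = 1 := by
    rw [← Matrix.det_fin_two]
    exact A.det_coe
  rw [mulVecProd_apply, mulVecProd_apply]
  simp only [coe_transpose, transpose_apply, SL2_inv_expl, cons_val', cons_val_zero,
    cons_val_fin_one, cons_val_one, neg_mul]
  linear_combination (v.1 * u.1 + v.2 * u.2) * hdet

end Matrix.SpecialLinearGroup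

section Lines

open Module

variable {K V : Type*} [Field K] [AddCommGroup V] [Module K V]

theorem eq_of_mem_of_finrank_eq_one {R : Type*} {P : V → R}
    (hP : ∀ (c : K) u, c ≠ 0 → P (c • u) = P u) {L : Submodule K V} (hL : finrank K L = 1)
    {u w : V} (hu : u ∈ L) (hu0 : u ≠ 0) (hw : w ∈ L) (hw0 : w ≠ 0) : P w = P u := by
  obtain ⟨c, hc⟩ := (finrank_eq_one_iff_of_nonzero' (⟨u, hu⟩ : L) (by simpa using hu0)).1 hL
    ⟨w, hw⟩
  have hc' : c • u = w := congrArg Subtype.val hc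
  have hc0 : c ≠ 0 := by
    rintro rfl
    exact hw0 (by simpa using hc'.symm)
  rw [← hc', hP c u hc0]

theorem map_finsum_lines {R G : Type*} [AddCommMonoid R] [Finite V] [FunLike G R R]
    [AddMonoidHomClass G R R] (φ : G) (σ : V ≃ₗ[K] V) (P : V → R)
    (hP : ∀ (c : K) u, c ≠ 0 → P (c • u) = P u) (hσ : ∀ u, φ (P u) = P (σ u))
    (rep : Submodule K V → V)
    (hrep : ∀ L : Submodule K V, finrank K L = 1 → rep L ∈ L ∧ rep L ≠ 0) :
    φ (∑ᶠ (L : Submodule K V) (_ : finrank K L = 1), P (rep L))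
      = ∑ᶠ (L : Submodule K V) (_ : finrank K L = 1), P (rep L) := by
  let Φ := Submodule.orderIsoMapComap σ
  have hΦ : ∀ L, Φ L = L.map (σ : V →ₗ[K] V) := Submodule.orderIsoMapComap_apply σ
  have hrank : ∀ L, finrank K (Φ L) = finrank K L := fun L ↦ by
    rw [hΦ, LinearEquiv.finrank_map_eq]
  have hterm : ∀ L : Submodule K V, φ (∑ᶠ (_ : finrank K L = 1), P (rep L))
      = ∑ᶠ (_ : finrank K (Φ L) = 1), P (rep (Φ L)) := by
    intro L
    rw [finsum_eq_if, finsum_eq_if, hrank]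
    split_ifs with hL
    · obtain ⟨hmem, hne⟩ := hrep L hL
      obtain ⟨hmem', hne'⟩ := hrep (Φ L) ((hrank L).trans hL)
      rw [hσ]
      exact eq_of_mem_of_finrank_eq_one hP ((hrank L).trans hL) hmem' hne'
        (by rw [hΦ]; exact Submodule.mem_map_of_mem hmem) (σ.map_ne_zero_iff.2 hne)
    · exact map_zero φ
  calc φ (∑ᶠ (L : Submodule K V) (_ : finrank K L = 1), P (rep L))
      = ∑ᶠ L : Submodule K V, φ (∑ᶠ (_ : finrank K L = 1), P (rep L)) :=
        map_finsum φ (Set.toFinite _)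
    _ = ∑ᶠ L : Submodule K V, ∑ᶠ (_ : finrank K (Φ L) = 1), P (rep (Φ L)) := finsum_congr hterm
    _ = ∑ᶠ (L : Submodule K V) (_ : finrank K L = 1), P (rep L) :=
        finsum_comp_equiv Φ.toEquiv (f := fun L ↦ ∑ᶠ (_ : finrank K L = 1), P (rep L))

end Lines

section ProdNonvanishing

open Matrix.SpecialLinearGroup
open scoped MatrixGroups

variable {F R : Type*} [Field F] [Fintype F] [DecidableEq F] [CommMonoid R]

def prodNonvanishing (ℓ : F × F → R) (u : F × F) : R :=
  ∏ v ∈ Finset.univ.filter (fun v : F × F ↦ v.1 * u.1 + v.2 * u.2 ≠ 0), ℓ v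

theorem prodNonvanishing_smul (ℓ : F × F → R) {c : F} (hc : c ≠ 0) (u : F × F) :
    prodNonvanishing ℓ (c • u) = prodNonvanishing ℓ u := by
  refine Finset.prod_congr (Finset.filter_congr fun v _ ↦ ?_) fun _ _ ↦ rfl
  rw [Prod.smul_fst, Prod.smul_snd, smul_eq_mul, smul_eq_mul,
    show v.1 * (c * u.1) + v.2 * (c * u.2) = c * (v.1 * u.1 + v.2 * u.2) by ring]
  exact mul_ne_zero_iff_left hc

theorem map_prodNonvanishing {G : Type*} [FunLike G R R] [MonoidHomClass G R R] (φ : G)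
    (A : SL(2, F)) (ℓ : F × F → R) (hℓ : ∀ v, φ (ℓ v) = ℓ (Aᵀ.mulVecProd v)) (u : F × F) :
    φ (prodNonvanishing ℓ u) = prodNonvanishing ℓ (A⁻¹.mulVecProd u) :=
  map_prod_eq_of_equivariant φ Aᵀ.mulVecProd.toEquiv ℓ hℓ fun v ↦ by
    simp only [Finset.mem_filter, Finset.mem_univ, true_and, LinearEquiv.coe_toEquiv,
      dot_mulVecProd_transpose_inv]

end ProdNonvanishing

open MvPolynomial in
theorem stmt_10_general (n : ℕ) (F : Type*) [Field F] [Fintype F] [DecidableEq F]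
    (hF : Fintype.card F = 2 ^ n)
    (k : Type*) [Field k] (ι : F →+* k)
    (g f : F → F → F)
    (hg : ∀ x y : F, g x y = x + y + x ^ 2 ^ (n - 1) * y ^ 2 ^ (n - 1))
    (hf : ∀ x y : F, f x y = g x y + 1)
    (ℓ : F → F → MvPolynomial (Fin 3) k)
    (hℓ : ∀ a b : F, ℓ a b = C (ι a) * X 0 + C (ι b) * X 1 + C (ι (g a b)) * X 2)
    (c0 : MvPolynomial (Fin 3) k)
    (hc0 : c0 = ∏ v ∈ Finset.univ.erase (0 : F × F), ℓ v.1 v.2)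
    (rep : Submodule F (F × F) → F × F)
    (hrep : ∀ L : Submodule F (F × F), Module.finrank F ↥L = 1 → rep L ∈ L ∧ rep L ≠ 0)
    (c1 : MvPolynomial (Fin 3) k)
    (hc1 : c1 = ∑ᶠ (L : Submodule F (F × F)) (_ : Module.finrank F ↥L = 1),
      ∏ v ∈ Finset.univ.filter (fun v : F × F => v.1 * (rep L).1 + v.2 * (rep L).2 ≠ 0),
        ℓ v.1 v.2)
    (τ : Matrix.SpecialLinearGroup (Fin 2) F →
      MvPolynomial (Fin 3) k →ₐ[k] MvPolynomial (Fin 3) k)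
    (hτ : ∀ A : Matrix.SpecialLinearGroup (Fin 2) F,
      τ A = aeval
        ![C (ι (A.1 0 0)) * X 0 + C (ι (A.1 0 1)) * X 1 + C (ι (f (A.1 0 0) (A.1 0 1))) * X 2,
          C (ι (A.1 1 0)) * X 0 + C (ι (A.1 1 1)) * X 1 + C (ι (f (A.1 1 0) (A.1 1 1))) * X 2,
          X 2]) :
    ∀ A : Matrix.SpecialLinearGroup (Fin 2) F, τ A c0 = c0 ∧ τ A c1 = c1 := by
  intro A
  have : CharP F 2 := charP_of_card_eq_prime_pow hF
  have hg' : ∀ x y, g x y = sqrtForm (iterateFrobenius F 2 (n - 1)) x y := hg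
  have hℓ' : ∀ a b, ℓ a b = linearForm ι a b (g a b) := hℓ
  have hτ' : τ A = aeval ![linearForm ι (A 0 0) (A 0 1) (f (A 0 0) (A 0 1)),
      linearForm ι (A 1 0) (A 1 1) (f (A 1 0) (A 1 1)), X 2] := hτ A
  have hdet : A 0 0 * A 1 1 - A 0 1 * A 1 0 = 1 := by
    rw [← Matrix.det_fin_two]
    exact A.det_coe
  have hℓA : ∀ v : F × F,
      τ A (ℓ v.1 v.2) = ℓ (A.transpose.mulVecProd v).1 (A.transpose.mulVecProd v).2 := by
    intro v
    rw [hℓ', hℓ', hτ', aeval_linearForm, Matrix.SpecialLinearGroup.mulVecProd_apply]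
    simp only [Matrix.SpecialLinearGroup.coe_transpose, Matrix.transpose_apply, hf, hg']
    rw [sqrtForm_mulVec _ (sq_pow_two_pow_pred_of_card_eq hF) hdet]
  refine ⟨?_, ?_⟩
  · rw [hc0]
    exact map_prod_eq_of_equivariant (τ A) A.transpose.mulVecProd.toEquiv _ hℓA fun v ↦ by
      simp only [Finset.mem_erase, Finset.mem_univ, and_true, LinearEquiv.coe_toEquiv,
        LinearEquiv.map_ne_zero_iff]
  · rw [hc1]
    exact map_finsum_lines (τ A) A⁻¹.mulVecProd _ (fun c u hc ↦ prodNonvanishing_smul _ hc u)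
      (map_prodNonvanishing (τ A) A _ hℓA) rep hrep

open MvPolynomial in
/-- The lifted Dickson invariants `c̃₀ = ∏_{(a,b)≠0} ℓ̃_{a,b}` and
`c̃₁ = Σ_L ∏_{ℓ|_L ≠ 0} ℓ̃_{a,b}` (with `ℓ̃_{a,b} = ι(a)x + ι(b)y + ι(g(a,b))z`) are
invariant under the action `τ_A` of the group `H₁ ≅ SL(2, GF(2^n))` on `k[x,y,z]`. -/
theorem stmt_10 (n : ℕ) (hn : 1 < n) (F : Type*) [Field F] [Fintype F] [DecidableEq F]
    (hF : Fintype.card F = 2 ^ n)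
    (k : Type*) [Field k] [CharP k 2] (ι : F →+* k) (hι : Function.Injective ι)
    (g f : F → F → F)
    (hg : ∀ x y : F, g x y = x + y + x ^ 2 ^ (n - 1) * y ^ 2 ^ (n - 1))
    (hf : ∀ x y : F, f x y = g x y + 1)
    (ℓ : F → F → MvPolynomial (Fin 3) k)
    (hℓ : ∀ a b : F, ℓ a b = C (ι a) * X 0 + C (ι b) * X 1 + C (ι (g a b)) * X 2)
    (c0 : MvPolynomial (Fin 3) k)
    (hc0 : c0 = ∏ v ∈ Finset.univ.erase (0 : F × F), ℓ v.1 v.2)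
    (rep : Submodule F (F × F) → F × F)
    (hrep : ∀ L : Submodule F (F × F), Module.finrank F ↥L = 1 → rep L ∈ L ∧ rep L ≠ 0)
    (c1 : MvPolynomial (Fin 3) k)
    (hc1 : c1 = ∑ᶠ (L : Submodule F (F × F)) (_ : Module.finrank F ↥L = 1),
      ∏ v ∈ Finset.univ.filter (fun v : F × F => v.1 * (rep L).1 + v.2 * (rep L).2 ≠ 0),
        ℓ v.1 v.2)
    (τ : Matrix.SpecialLinearGroup (Fin 2) F →
      MvPolynomial (Fin 3) k →ₐ[k] MvPolynomial (Fin 3) k)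
    (hτ : ∀ A : Matrix.SpecialLinearGroup (Fin 2) F,
      τ A = aeval
        ![C (ι (A.1 0 0)) * X 0 + C (ι (A.1 0 1)) * X 1 + C (ι (f (A.1 0 0) (A.1 0 1))) * X 2,
          C (ι (A.1 1 0)) * X 0 + C (ι (A.1 1 1)) * X 1 + C (ι (f (A.1 1 0) (A.1 1 1))) * X 2,
          X 2]) :
    ∀ A : Matrix.SpecialLinearGroup (Fin 2) F, τ A c0 = c0 ∧ τ A c1 = c1 :=
  stmt_10_general n F hF k ι g f hg hf ℓ hℓ c0 hc0 rep hrep c1 hc1 τ hτ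
end

section
/- Let n > 1, let F = GF(2^n), and let k be a field of characteristic 2 with an injective ring homomorphism ι : F → k. With g(x,y) = x + y + x^(2^(n-1))·y^(2^(n-1)), f(x,y) = g(x,y) + 1, ℓ̃_{a,b} = ι(a)·x + ι(b)·y + ι(g(a,b))·z, and c̃₀ = ∏_{(a,b) ≠ (0,0)} ℓ̃_{a,b} in k[x,y,z], there exists a polynomial ũ ∈ k[x,y,z] such that ũ^(2^n − 1) = c̃₀ and ũ is fixed by the k-algebra automorphism τ_A (x ↦ ι(a)·x + ι(b)·y + ι(f(a,b))·z, y ↦ ι(c)·x + ι(d)·y + ι(f(c,d))·z, z ↦ z) for every A = [[a,b],[c,d]] ∈ SL(2, F). -/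
/-!
In characteristic 2, `g(x,y)` is the square root of the quadratic form `x² + xy + y²`; hence
it is homogeneous of degree one, `ℓ̃_{λa,λb} = ι(λ) ℓ̃_{a,b}`, and comparing squares shows
`g(aα+bγ, aβ+bδ) = a f(α,β) + b f(γ,δ) + g(a,b)` when `αδ - βγ = 1`, i.e.
`τ_A ℓ̃_v = ℓ̃_{vA}`. Take `ũ` to be the product of `ℓ̃` over the representatives `(0,1)`,
`(1,b)` of the projective line over `F`. Every nonzero `v` is `λp` for a unique representative
`p` and `λ ∈ Fˣ`, so `c̃₀ = ι((∏_{λ ≠ 0} λ)^{q+1}) ũ^{q-1} = ũ^{q-1}` by Wilson's theorem for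
`F`. The rows `pA` are again representatives up to scalars, and the product of these scalars
is `det A = 1`.
-/

open Finset

section FiniteField

variable {K : Type*} [Field K] [Fintype K]

theorem prod_erase_zero_eq_neg_one [DecidableEq K] : ∏ a ∈ univ.erase (0 : K), a = -1 := by
  rw [prod_subtype _ (p := (· ≠ 0)) (by simp),
    ← Fintype.prod_equiv unitsEquivNeZero (fun u => (u : K)) _ fun _ => rfl, ← Units.coe_prod,
    FiniteField.prod_univ_units_id_eq_neg_one, Units.val_neg, Units.val_one]

theorem sq_pow_two_pow_pred {n : ℕ} (hK : Fintype.card K = 2 ^ n) (x : K) :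
    (x ^ 2 ^ (n - 1)) ^ 2 = x := by
  have hn : n ≠ 0 := by
    rintro rfl
    exact (Fintype.one_lt_card (α := K)).ne' hK
  rw [← pow_mul, ← pow_succ, Nat.sub_add_cancel (Nat.one_le_iff_ne_zero.mpr hn), ← hK,
    FiniteField.pow_card]

end FiniteField

section SqrtQuadForm

variable {K : Type*} [Field K] [CharP K 2]

def IsSqrtQuadForm (g : K → K → K) : Prop :=
  ∀ x y, g x y ^ 2 = x ^ 2 + x * y + y ^ 2

theorem isSqrtQuadForm_of_card_eq_two_pow [Fintype K] {n : ℕ} (hK : Fintype.card K = 2 ^ n) :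
    IsSqrtQuadForm fun x y : K => x + y + x ^ 2 ^ (n - 1) * y ^ 2 ^ (n - 1) := by
  intro x y
  rw [CharTwo.add_sq, CharTwo.add_sq, mul_pow, sq_pow_two_pow_pred hK, sq_pow_two_pow_pred hK]
  ring

namespace IsSqrtQuadForm

variable {g : K → K → K} (hg : IsSqrtQuadForm g)
include hg

theorem mul_mul (c x y : K) : g (c * x) (c * y) = c * g x y := by
  apply CharTwo.sq_injective
  simp only [mul_pow]
  rw [hg, hg]
  ring

theorem add_mul_add_mul {α β γ δ : K} (hdet : α * δ - β * γ = 1) (a b : K) :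
    g (a * α + b * γ) (a * β + b * δ) = a * (g α β + 1) + b * (g γ δ + 1) + g a b := by
  apply CharTwo.sq_injective
  simp only [CharTwo.add_sq, mul_pow, one_pow]
  rw [hg, hg, hg, hg]
  linear_combination a * b * hdet +
    (a * b * (α * γ + β * γ + β * δ) - a ^ 2 - b ^ 2) * CharTwo.two_eq_zero (R := K)

end IsSqrtQuadForm

end SqrtQuadForm

section ProjectiveLine

variable {K R : Type*} [Field K] [CommMonoid R]

theorem apply_zero_eq_mul {s : K →* R} {L : K → K → R}
    (hL : ∀ c a b, L (c * a) (c * b) = s c * L a b) (b : K) : L 0 b = s b * L 0 1 := by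
  simpa using hL b 0 1

variable [Fintype K]

def projLineProd (L : K → K → R) : R :=
  L 0 1 * ∏ b, L 1 b

theorem map_projLineProd {S G : Type*} [CommMonoid S] [FunLike G R S] [MonoidHomClass G R S]
    (φ : G) (L : K → K → R) : φ (projLineProd L) = projLineProd fun a b => φ (L a b) := by
  simp only [projLineProd, map_mul, map_prod]

variable (s : K →* R) {L : K → K → R} (hL : ∀ c a b, L (c * a) (c * b) = s c * L a b)
include hL

theorem prod_apply_eq_mul_prod {a : K} (ha : a ≠ 0) : ∏ b, L a b = s a * ∏ b, L 1 b := by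
  calc ∏ b, L a b = ∏ b, L (a * 1) (a * b) :=
        (Fintype.prod_equiv (Equiv.mulLeft₀ a ha) _ _ fun b => by simp).symm
    _ = s a ^ Fintype.card K * ∏ b, L 1 b := by
      simp only [hL, prod_mul_distrib, prod_const, card_univ]
    _ = s a * ∏ b, L 1 b := by rw [← map_pow, FiniteField.pow_card]

theorem prod_erase_zero_eq_projLineProd_pow [DecidableEq K] :
    ∏ v ∈ univ.erase (0 : K × K), L v.1 v.2 = projLineProd L ^ (Fintype.card K - 1) := by
  have hsplit : ∏ v ∈ univ.erase (0 : K × K), L v.1 v.2 =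
      (∏ a ∈ univ.erase 0, ∏ b, L a b) * ∏ b ∈ univ.erase 0, L 0 b := by
    rw [← filter_ne', prod_filter, Fintype.prod_prod_type, ← mul_prod_erase univ _ (mem_univ 0),
      mul_comm]
    congr 1
    · exact prod_congr rfl fun a ha => by simp [ne_of_mem_erase ha]
    · simp [prod_ite, filter_ne']
  have hsq : s (-1) * s (-1) = 1 := by rw [← map_mul, mul_neg_one, neg_neg, map_one]
  rw [hsplit, prod_congr rfl fun a ha => prod_apply_eq_mul_prod s hL (ne_of_mem_erase ha),
    prod_congr rfl fun b _ => apply_zero_eq_mul hL b, prod_mul_distrib, prod_mul_distrib,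
    ← map_prod, prod_erase_zero_eq_neg_one, prod_const, prod_const,
    card_erase_of_mem (mem_univ _), card_univ, mul_mul_mul_comm, hsq, one_mul, projLineProd,
    mul_pow, mul_comm]

theorem mul_prod_apply_mul_add [DecidableEq K] (p : K) {e : K} (he : e ≠ 0) :
    L 1 p * ∏ a, L a (p * a + e) = s (-e) * projLineProd L := by
  have hrow : ∀ a ∈ univ.erase 0, L a (p * a + e) = s a * L 1 (p + e * a⁻¹) := by
    intro a ha
    rw [← hL]
    congr 1 <;> field_simp [ne_of_mem_erase ha]
  have hreindex : ∏ a ∈ univ.erase 0, L 1 (p + e * a⁻¹) = ∏ c ∈ univ.erase p, L 1 c :=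
    prod_equiv (((Equiv.inv K).trans (Equiv.mulLeft₀ e he)).trans (Equiv.addLeft p))
      (by simp [he]) fun _ _ => rfl
  rw [← mul_prod_erase univ _ (mem_univ 0), prod_congr rfl hrow, prod_mul_distrib, ← map_prod,
    prod_erase_zero_eq_neg_one, hreindex, mul_zero, zero_add, apply_zero_eq_mul hL e,
    projLineProd, ← mul_prod_erase univ _ (mem_univ p), ← neg_one_mul e, map_mul]
  simp only [mul_comm, mul_assoc, mul_left_comm]

theorem projLineProd_transform {α β γ δ : K} (hdet : α * δ - β * γ ≠ 0) :
    projLineProd (fun a b => L (a * α + b * γ) (a * β + b * δ)) =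
      s (α * δ - β * γ) * projLineProd L := by
  classical
  simp only [projLineProd, zero_mul, one_mul, zero_add]
  rcases eq_or_ne γ 0 with rfl | hγ
  · have hα : α ≠ 0 := left_ne_zero_of_mul (by simpa using hdet)
    have hδ : δ ≠ 0 := right_ne_zero_of_mul (by simpa using hdet)
    have hreindex : ∏ b, L α (β + b * δ) = ∏ c, L α c :=
      Fintype.prod_equiv ((Equiv.mulRight₀ δ hδ).trans (Equiv.addLeft β)) _ _ fun _ => rfl
    simp only [mul_zero, add_zero, sub_zero]
    rw [hreindex, prod_apply_eq_mul_prod s hL hα, apply_zero_eq_mul hL δ, map_mul]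
    ac_rfl
  · have hreindex : ∏ b, L (α + b * γ) (β + b * δ) =
        ∏ a, L a (δ / γ * a + -(α * δ - β * γ) / γ) :=
      Fintype.prod_bijective (fun b => α + b * γ)
        ((Equiv.mulRight₀ γ hγ).trans (Equiv.addLeft α)).bijective _ _ fun b => by
        congr 1
        field_simp
        ring
    have hfirst : L γ δ = s γ * L 1 (δ / γ) := by rw [← hL, mul_one, mul_div_cancel₀ _ hγ]
    rw [hreindex, hfirst, mul_assoc,
      mul_prod_apply_mul_add s hL _ (div_ne_zero (neg_ne_zero.mpr hdet) hγ), ← mul_assoc,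
      ← map_mul]
    congr 2
    field_simp

end ProjectiveLine

open MvPolynomial in
theorem stmt_11_general (n : ℕ) (F : Type*) [Field F] [Fintype F] [DecidableEq F]
    (hF : Fintype.card F = 2 ^ n)
    (k : Type*) [Field k] (ι : F →+* k)
    (g f : F → F → F)
    (hg : ∀ x y : F, g x y = x + y + x ^ 2 ^ (n - 1) * y ^ 2 ^ (n - 1))
    (hf : ∀ x y : F, f x y = g x y + 1)
    (ℓ : F → F → MvPolynomial (Fin 3) k)
    (hℓ : ∀ a b : F, ℓ a b = C (ι a) * X 0 + C (ι b) * X 1 + C (ι (g a b)) * X 2)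
    (c0 : MvPolynomial (Fin 3) k)
    (hc0 : c0 = ∏ v ∈ Finset.univ.erase (0 : F × F), ℓ v.1 v.2)
    (τ : Matrix.SpecialLinearGroup (Fin 2) F →
      MvPolynomial (Fin 3) k →ₐ[k] MvPolynomial (Fin 3) k)
    (hτ : ∀ A : Matrix.SpecialLinearGroup (Fin 2) F,
      τ A = aeval
        ![C (ι (A.1 0 0)) * X 0 + C (ι (A.1 0 1)) * X 1 + C (ι (f (A.1 0 0) (A.1 0 1))) * X 2,
          C (ι (A.1 1 0)) * X 0 + C (ι (A.1 1 1)) * X 1 + C (ι (f (A.1 1 0) (A.1 1 1))) * X 2,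
          X 2]) :
    ∃ u : MvPolynomial (Fin 3) k, u ^ (2 ^ n - 1) = c0 ∧
      ∀ A : Matrix.SpecialLinearGroup (Fin 2) F, τ A u = u := by
  have : CharP F 2 := charP_of_card_eq_prime_pow hF
  have hgs : IsSqrtQuadForm g := fun x y => by
    rw [hg]
    exact isSqrtQuadForm_of_card_eq_two_pow hF x y
  let s : F →* MvPolynomial (Fin 3) k := (C.comp ι).toMonoidHom
  have hℓ_mul : ∀ c a b, ℓ (c * a) (c * b) = s c * ℓ a b := fun c a b => by
    simp only [hℓ, hgs.mul_mul, s, RingHom.toMonoidHom_eq_coe, MonoidHom.coe_coe,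
      RingHom.coe_comp, Function.comp_apply, map_mul]
    ring
  refine ⟨projLineProd ℓ, by rw [hc0, prod_erase_zero_eq_projLineProd_pow s hℓ_mul, hF], ?_⟩
  intro A
  have hdet : A.1 0 0 * A.1 1 1 - A.1 0 1 * A.1 1 0 = 1 := by
    rw [← Matrix.det_fin_two]
    exact A.2
  have hτℓ : ∀ a b, τ A (ℓ a b) =
      ℓ (a * A.1 0 0 + b * A.1 1 0) (a * A.1 0 1 + b * A.1 1 1) := fun a b => by
    rw [hτ, hℓ, hℓ, hgs.add_mul_add_mul hdet, ← hf, ← hf]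
    simp only [map_add, map_mul, aeval_C, aeval_X, algebraMap_eq, Matrix.cons_val_zero,
      Matrix.cons_val_one, Matrix.cons_val_two, Matrix.head_cons, Matrix.tail_cons]
    ring
  calc τ A (projLineProd ℓ) = projLineProd fun a b => τ A (ℓ a b) := map_projLineProd _ _
    _ = s 1 * projLineProd ℓ := by
      simp only [hτℓ]
      rw [projLineProd_transform s hℓ_mul (by rw [hdet]; exact one_ne_zero), hdet]
    _ = projLineProd ℓ := by rw [map_one, one_mul]

open MvPolynomial in
/-- The lifted invariant `c̃₀ = ∏_{(a,b)≠0} ℓ̃_{a,b}` admits a `(2^n - 1)`-th root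
`ũ ∈ k[x,y,z]`, and this root is invariant under the action `τ_A` of `H₁ ≅ SL(2, GF(2^n))`. -/
theorem stmt_11 (n : ℕ) (hn : 1 < n) (F : Type*) [Field F] [Fintype F] [DecidableEq F]
    (hF : Fintype.card F = 2 ^ n)
    (k : Type*) [Field k] [CharP k 2] (ι : F →+* k) (hι : Function.Injective ι)
    (g f : F → F → F)
    (hg : ∀ x y : F, g x y = x + y + x ^ 2 ^ (n - 1) * y ^ 2 ^ (n - 1))
    (hf : ∀ x y : F, f x y = g x y + 1)
    (ℓ : F → F → MvPolynomial (Fin 3) k)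
    (hℓ : ∀ a b : F, ℓ a b = C (ι a) * X 0 + C (ι b) * X 1 + C (ι (g a b)) * X 2)
    (c0 : MvPolynomial (Fin 3) k)
    (hc0 : c0 = ∏ v ∈ Finset.univ.erase (0 : F × F), ℓ v.1 v.2)
    (τ : Matrix.SpecialLinearGroup (Fin 2) F →
      MvPolynomial (Fin 3) k →ₐ[k] MvPolynomial (Fin 3) k)
    (hτ : ∀ A : Matrix.SpecialLinearGroup (Fin 2) F,
      τ A = aeval
        ![C (ι (A.1 0 0)) * X 0 + C (ι (A.1 0 1)) * X 1 + C (ι (f (A.1 0 0) (A.1 0 1))) * X 2,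
          C (ι (A.1 1 0)) * X 0 + C (ι (A.1 1 1)) * X 1 + C (ι (f (A.1 1 0) (A.1 1 1))) * X 2,
          X 2]) :
    ∃ u : MvPolynomial (Fin 3) k, u ^ (2 ^ n - 1) = c0 ∧
      ∀ A : Matrix.SpecialLinearGroup (Fin 2) F, τ A u = u :=
  stmt_11_general n F hF k ι g f hg hf ℓ hℓ c0 hc0 τ hτ
end
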